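/- Assume y₀ is differentiable on (0,∞) with y₀′(s) = −y₁(s), and assume there is a constant C > 0 such that |y₀(s)| ≤ C·s^{−1/2} and |y₁(s)| ≤ C·s^{−1/2} for all s ≥ 1. Then for every integer N ≥ 1 and every (τ,θ) with N·e^{−τ} ≥ 1: |∂P_N/∂θ (τ,θ)| ≤ A·C·e^{τ/2} and |∂P_N/∂τ (τ,θ)| ≤ A·C·e^{−τ/2}. In particular, on every compact subset of ℝ² the first derivatives of P_N are bounded uniformly in N (but do not tend to zero). -/

import Mathlib

/-!
With `s = N·e^{−τ}` one has `√s = √N·e^{−τ/2}`. Differentiating in `θ` produces a factor `N`,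
so `|∂_θ P_N| ≤ (A/√N)·N·|y₀(s)| ≤ A·C·√N/√s = A·C·e^{τ/2}`; differentiating in `τ` produces
`∂_τ s = −s`, so `|∂_τ P_N| ≤ (A/√N)·s·|y₁(s)| ≤ A·C·√s/√N = A·C·e^{−τ/2}`.
-/

/-- The Gowdy wave `P_N(τ,θ) = (A/√N)·y₀(N·e^{−τ})·sin(N·θ)` (in the paper `y₀ = J₀`). -/
noncomputable def P_N (A : ℝ) (y₀ : ℝ → ℝ) (N : ℕ) (τ θ : ℝ) : ℝ :=
  (A / Real.sqrt N) * y₀ ((N : ℝ) * Real.exp (-τ)) * Real.sin ((N : ℝ) * θ)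

open Real

lemma sqrt_mul_exp_neg {n : ℝ} (hn : 0 ≤ n) (τ : ℝ) :
    √(n * exp (-τ)) = √n * exp (-τ / 2) := by
  rw [sqrt_mul hn, ← exp_half]

lemma sqrt_mul_inv_sqrt_mul_exp_neg {n : ℝ} (hn : 0 < n) (τ : ℝ) :
    √n * (√(n * exp (-τ)))⁻¹ = exp (τ / 2) := by
  rw [sqrt_mul_exp_neg hn.le, mul_inv, ← mul_assoc, mul_inv_cancel₀ (by positivity), one_mul,
    ← exp_neg, neg_div, neg_neg]

lemma inv_sqrt_mul_sqrt_mul_exp_neg {n : ℝ} (hn : 0 < n) (τ : ℝ) :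
    (√n)⁻¹ * √(n * exp (-τ)) = exp (-τ / 2) := by
  rw [sqrt_mul_exp_neg hn.le, ← mul_assoc, inv_mul_cancel₀ (by positivity), one_mul]

lemma rpow_neg_one_div_two_eq_inv_sqrt {s : ℝ} (hs : 0 ≤ s) : s ^ (-(1 : ℝ) / 2) = (√s)⁻¹ := by
  rw [neg_div, rpow_neg hs, sqrt_eq_rpow]

lemma hasDerivAt_comp_mul_exp_neg {y₀ y₁ : ℝ → ℝ} {c τ : ℝ}
    (hy : HasDerivAt y₀ (-y₁ (c * exp (-τ))) (c * exp (-τ))) :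
    HasDerivAt (fun t => y₀ (c * exp (-t))) (y₁ (c * exp (-τ)) * (c * exp (-τ))) τ :=
  (HasDerivAt.comp τ hy (((hasDerivAt_neg τ).exp).const_mul c)).congr_deriv (by ring)

lemma hasDerivAt_P_N_angle (A : ℝ) (y₀ : ℝ → ℝ) (N : ℕ) (τ θ : ℝ) :
    HasDerivAt (fun s => P_N A y₀ N τ s)
      (A / √N * y₀ (N * exp (-τ)) * (cos (N * θ) * N)) θ := by
  unfold P_N
  simpa using ((hasDerivAt_id θ).const_mul (N : ℝ)).sin.const_mul (A / √N * y₀ (N * exp (-τ)))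

lemma hasDerivAt_P_N_time (A : ℝ) {y₀ y₁ : ℝ → ℝ} (N : ℕ) (τ θ : ℝ)
    (hy : HasDerivAt y₀ (-y₁ (N * exp (-τ))) (N * exp (-τ))) :
    HasDerivAt (fun t => P_N A y₀ N t θ)
      (A / √N * (y₁ (N * exp (-τ)) * (N * exp (-τ))) * sin (N * θ)) τ :=
  ((hasDerivAt_comp_mul_exp_neg hy).const_mul _).mul_const _

lemma abs_deriv_P_N_angle_le {A C : ℝ} {y₀ : ℝ → ℝ} {N : ℕ} {τ : ℝ} (θ : ℝ)
    (hA : 0 ≤ A) (hN : 0 < N) (hb : |y₀ (N * exp (-τ))| ≤ C * (N * exp (-τ)) ^ (-(1 : ℝ) / 2)) :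
    |deriv (fun s => P_N A y₀ N τ s) θ| ≤ A * C * exp (τ / 2) := by
  have hn : (0 : ℝ) < N := Nat.cast_pos.mpr hN
  set y := y₀ (N * exp (-τ))
  rw [rpow_neg_one_div_two_eq_inv_sqrt (by positivity)] at hb
  rw [(hasDerivAt_P_N_angle A y₀ N τ θ).deriv]
  calc |A / √N * y * (cos (N * θ) * N)| = A * (N / √N) * (|y| * |cos (N * θ)|) := by
        rw [abs_mul, abs_mul, abs_mul, abs_div, abs_of_nonneg hA, abs_of_pos hn,
          abs_of_nonneg (sqrt_nonneg _)]
        ring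
    _ ≤ A * (N / √N) * |y| := by
        gcongr; exact mul_le_of_le_one_right (abs_nonneg y) (abs_cos_le_one _)
    _ ≤ A * √N * (C * (√(N * exp (-τ)))⁻¹) := by rw [div_sqrt]; gcongr
    _ = A * C * exp (τ / 2) := by rw [← sqrt_mul_inv_sqrt_mul_exp_neg hn τ]; ring

lemma abs_deriv_P_N_time_le {A C : ℝ} {y₀ y₁ : ℝ → ℝ} {N : ℕ} {τ : ℝ} (θ : ℝ)
    (hA : 0 ≤ A) (hN : 0 < N) (hy : HasDerivAt y₀ (-y₁ (N * exp (-τ))) (N * exp (-τ)))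
    (hb : |y₁ (N * exp (-τ))| ≤ C * (N * exp (-τ)) ^ (-(1 : ℝ) / 2)) :
    |deriv (fun t => P_N A y₀ N t θ) τ| ≤ A * C * exp (-τ / 2) := by
  have hn : (0 : ℝ) < N := Nat.cast_pos.mpr hN
  set s := (N : ℝ) * exp (-τ)
  have hs : 0 < s := by positivity
  rw [rpow_neg_one_div_two_eq_inv_sqrt hs.le] at hb
  rw [(hasDerivAt_P_N_time A N τ θ hy).deriv]
  calc |A / √N * (y₁ s * s) * sin (N * θ)| = A * (√N)⁻¹ * s * (|y₁ s| * |sin (N * θ)|) := by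
        rw [abs_mul, abs_mul, abs_mul, abs_div, abs_of_nonneg hA, abs_of_pos hs,
          abs_of_nonneg (sqrt_nonneg _)]
        ring
    _ ≤ A * (√N)⁻¹ * s * |y₁ s| := by
        gcongr; exact mul_le_of_le_one_right (abs_nonneg _) (abs_sin_le_one _)
    _ ≤ A * (√N)⁻¹ * s * (C * (√s)⁻¹) := by gcongr
    _ = A * C * ((√N)⁻¹ * (s / √s)) := by ring
    _ = A * C * exp (-τ / 2) := by rw [div_sqrt, inv_sqrt_mul_sqrt_mul_exp_neg hn τ]

theorem P_N_derivatives_bounded_general (A C : ℝ) (hA : 0 < A) (y₀ y₁ : ℝ → ℝ)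
    (hy₀ : ∀ s > (0:ℝ), HasDerivAt y₀ (-y₁ s) s)
    (hb₀ : ∀ s : ℝ, 1 ≤ s → |y₀ s| ≤ C * s ^ (-(1:ℝ)/2))
    (hb₁ : ∀ s : ℝ, 1 ≤ s → |y₁ s| ≤ C * s ^ (-(1:ℝ)/2))
    (N : ℕ) (τ θ : ℝ) (h : 1 ≤ (N : ℝ) * Real.exp (-τ)) :
    |deriv (fun s : ℝ => P_N A y₀ N τ s) θ| ≤ A * C * Real.exp (τ / 2) ∧
    |deriv (fun t : ℝ => P_N A y₀ N t θ) τ| ≤ A * C * Real.exp (-τ / 2) := by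
  have hN : 0 < N := Nat.cast_pos.mp (pos_of_mul_pos_left (one_pos.trans_le h) (exp_pos _).le)
  exact ⟨abs_deriv_P_N_angle_le θ hA.le hN (hb₀ _ h),
    abs_deriv_P_N_time_le θ hA.le hN (hy₀ _ (one_pos.trans_le h)) (hb₁ _ h)⟩

/-- If `y₀′ = −y₁` on `(0,∞)` and `|y₀(s)|, |y₁(s)| ≤ C·s^{−1/2}` for
`s ≥ 1`, then for every `N ≥ 1` and every `(τ,θ)` with `N·e^{−τ} ≥ 1` the first
derivatives of `P_N` obey `|∂P_N/∂θ| ≤ A·C·e^{τ/2}` and `|∂P_N/∂τ| ≤ A·C·e^{−τ/2}`. -/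
theorem P_N_derivatives_bounded (A C : ℝ) (hA : 0 < A) (hC : 0 < C) (y₀ y₁ : ℝ → ℝ)
    (hy₀ : ∀ s > (0:ℝ), HasDerivAt y₀ (-y₁ s) s)
    (hb₀ : ∀ s : ℝ, 1 ≤ s → |y₀ s| ≤ C * s ^ (-(1:ℝ)/2))
    (hb₁ : ∀ s : ℝ, 1 ≤ s → |y₁ s| ≤ C * s ^ (-(1:ℝ)/2))
    (N : ℕ) (hN : 1 ≤ N) (τ θ : ℝ) (h : 1 ≤ (N : ℝ) * Real.exp (-τ)) :
    |deriv (fun s : ℝ => P_N A y₀ N τ s) θ| ≤ A * C * Real.exp (τ / 2) ∧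
    |deriv (fun t : ℝ => P_N A y₀ N t θ) τ| ≤ A * C * Real.exp (-τ / 2) :=
  P_N_derivatives_bounded_general A C hA y₀ y₁ hy₀ hb₀ hb₁ N τ θ h
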